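/- arXiv:2401.12096 — 3 statements merged into one kernel-verified Lean document; each statement's English description precedes it below -/
import Mathlib

section
/- Let V be a finite-dimensional real vector space, ω : V × V → ℝ an alternating bilinear form with kernel K = {v ∈ V : ω(v, w) = 0 for all w ∈ V}, let W be a linear complement of K in V, and let P : V → V be the projection onto K along W. Then the alternating bilinear form ω̃ on V × K* defined by ω̃((v, μ), (v', μ')) = ω(v, v') + μ'(P v) − μ(P v') is nondegenerate, i.e. (V × K*, ω̃) is a symplectic vector space. -/
/-!
Pairing with `(0, μ')` gives `μ'(P v) = 0` for every `μ'`, so `P v = 0`; pairing with `(v', 0)`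
gives `ω(v, ·) = μ ∘ P`. On `K` the left side vanishes by skew-symmetry while `P` is the identity,
so `μ = 0`; then `v` lies in the kernel `K` of `ω` and in `ker P`, hence `v = P v = 0`.
-/

open Module

theorem thickeningForm_nondegenerate {𝕜 V : Type*} [Field 𝕜] [AddCommGroup V] [Module 𝕜 V]
    {ω : V →ₗ[𝕜] V →ₗ[𝕜] 𝕜} (hω : ω.IsAlt) {K : Submodule 𝕜 V}
    (hK : ∀ v, v ∈ K ↔ ∀ w, ω v w = 0) (Q : V →ₗ[𝕜] K) (hQ : ∀ k : K, Q k = k)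
    {v : V} {μ : Dual 𝕜 K} (h : ∀ (v' : V) (μ' : Dual 𝕜 K), ω v v' + μ' (Q v) - μ (Q v') = 0) :
    v = 0 ∧ μ = 0 := by
  have hQv : Q v = 0 := (forall_dual_apply_eq_zero_iff 𝕜 _).mp fun μ' => by simpa using h 0 μ'
  have hωμ : ∀ v', ω v v' = μ (Q v') := fun v' => by simpa [sub_eq_zero] using h v' 0
  have hμ : μ = 0 := by
    ext k
    rw [LinearMap.zero_apply, ← hQ k, ← hωμ, ← hω.neg, (hK k).mp k.2 v, neg_zero]
  have hvK : v ∈ K := (hK v).mpr fun w => by simp [hωμ, hμ]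
  exact ⟨congrArg Subtype.val ((hQ ⟨v, hvK⟩).symm.trans hQv), hμ⟩

theorem statement1_general (V : Type*) [AddCommGroup V] [Module ℝ V]
    (ω : V →ₗ[ℝ] V →ₗ[ℝ] ℝ) (halt : ∀ v : V, ω v v = 0)
    (K : Submodule ℝ V)
    (hK : ∀ v : V, v ∈ K ↔ ∀ w : V, ω v w = 0)
    (P : V →ₗ[ℝ] V)
    (hPmem : ∀ v : V, P v ∈ K)
    (hProj : P ∘ₗ P = P)
    (hPrange : LinearMap.range P = K) :
    ∀ (v : V) (μ : Module.Dual ℝ ↥K),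
      (∀ (v' : V) (μ' : Module.Dual ℝ ↥K),
          ω v v' + μ' ⟨P v, hPmem v⟩ - μ ⟨P v', hPmem v'⟩ = 0) →
      v = 0 ∧ μ = 0 := by
  intro v μ h
  have hPfix (k : K) : P k = k :=
    (LinearMap.IsIdempotentElem.mem_range_iff (p := P) hProj).mp (hPrange ▸ k.2)
  exact thickeningForm_nondegenerate halt hK (P.codRestrict K hPmem)
    (fun k => Subtype.ext (hPfix k)) h

/-- Let `V` be a finite-dimensional real vector space, `ω` an alternating
bilinear form on `V` with kernel `K`, `W` a linear complement of `K`, and `P : V → V` the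
projection onto `K` along `W`.  Then the alternating bilinear form `ω̃` on `V × K*` given by
`ω̃((v,μ),(v',μ')) = ω(v,v') + μ'(P v) − μ(P v')` is nondegenerate, i.e. `(V × K*, ω̃)` is a
symplectic vector space. -/
theorem statement1 (V : Type*) [AddCommGroup V] [Module ℝ V] [FiniteDimensional ℝ V]
    (ω : V →ₗ[ℝ] V →ₗ[ℝ] ℝ) (halt : ∀ v : V, ω v v = 0)
    (K W : Submodule ℝ V)
    (hK : ∀ v : V, v ∈ K ↔ ∀ w : V, ω v w = 0)
    (hcompl : IsCompl K W)
    (P : V →ₗ[ℝ] V)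
    (hPmem : ∀ v : V, P v ∈ K)
    (hProj : P ∘ₗ P = P)
    (hPrange : LinearMap.range P = K)
    (hPker : LinearMap.ker P = W) :
    ∀ (v : V) (μ : Module.Dual ℝ ↥K),
      (∀ (v' : V) (μ' : Module.Dual ℝ ↥K),
          ω v v' + μ' ⟨P v, hPmem v⟩ - μ ⟨P v', hPmem v'⟩ = 0) →
      v = 0 ∧ μ = 0 :=
  statement1_general V ω halt K hK P hPmem hProj hPrange
end

section
/- Let V be a real Banach space, ω : V × V → ℝ a continuous alternating bilinear form with kernel K = {v ∈ V : ω(v, w) = 0 for all w ∈ V}, assume K is complemented in V with complement W, and let P : V → V be the continuous projection onto K along W. Then the continuous alternating bilinear form ω̃ on V × K* (K* the continuous dual of K) defined by ω̃((v, μ), (v', μ')) = ω(v, v') + μ'(P v) − μ(P v') is weakly nondegenerate: if ω̃((v, μ), (v', μ')) = 0 for all (v', μ') ∈ V × K*, then (v, μ) = (0, 0). -/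
/-!
Pairing against `μ'` with `v' = 0` and Hahn–Banach on `K` give `P v = 0`; pairing with `μ' = 0`
gives `ω(v, ·) = μ ∘ P`. Since `ω(v, ·)` vanishes on `K` by antisymmetry and `μ ∘ P` vanishes on
`ker P`, `v` lies in the kernel `K = range P`, so `v = P v = 0`; then `μ ∘ P = 0` forces `μ = 0`.
-/

section Thickening

variable {𝕜 V : Type*} [NormedField 𝕜] [AddCommGroup V] [TopologicalSpace V] [Module 𝕜 V]
  {ω : V →L[𝕜] V →L[𝕜] 𝕜} {K : Submodule 𝕜 V}

def thickenedForm (ω : V →L[𝕜] V →L[𝕜] 𝕜) (Q : V →L[𝕜] K) (x y : V × (K →L[𝕜] 𝕜)) : 𝕜 :=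
  ω x.1 y.1 + y.2 (Q x.1) - x.2 (Q y.1)

theorem apply_eq_zero_of_mem_kernel (halt : ∀ v : V, ω v v = 0)
    (hK : ∀ v : V, v ∈ K ↔ ∀ w : V, ω v w = 0) (v : V) {k : V} (hk : k ∈ K) : ω v k = 0 :=
  calc ω v k = -ω k v := (LinearMap.IsAlt.neg (B := ω.toLinearMap₁₂) halt k v).symm
    _ = 0 := by rw [(hK k).1 hk v, neg_zero]

theorem mem_kernel_of_apply_eq_comp_retraction (halt : ∀ v : V, ω v v = 0)
    (hK : ∀ v : V, v ∈ K ↔ ∀ w : V, ω v w = 0) {Q : V →L[𝕜] K} (hQ : ∀ k : K, Q k = k)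
    {v : V} {μ : K →L[𝕜] 𝕜} (hv : ∀ w : V, ω v w = μ (Q w)) : v ∈ K := by
  refine (hK v).2 fun w ↦ ?_
  calc ω v w = ω v (w - Q w) + ω v (Q w) := by rw [map_sub, sub_add_cancel]
    _ = 0 := by
      rw [hv, map_sub, hQ, sub_self, map_zero, apply_eq_zero_of_mem_kernel halt hK v (Q w).2,
        add_zero]

theorem eq_zero_of_forall_thickenedForm_eq_zero [SeparatingDual 𝕜 K]
    (halt : ∀ v : V, ω v v = 0) (hK : ∀ v : V, v ∈ K ↔ ∀ w : V, ω v w = 0)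
    {Q : V →L[𝕜] K} (hQ : ∀ k : K, Q k = k) {x : V × (K →L[𝕜] 𝕜)}
    (h : ∀ y, thickenedForm ω Q x y = 0) : x = 0 := by
  obtain ⟨v, μ⟩ := x
  have hQv : Q v = 0 := SeparatingDual.eq_zero_of_forall_dual_eq_zero fun μ' ↦ by
    simpa [thickenedForm] using h (0, μ')
  have hv : ∀ w, ω v w = μ (Q w) := fun w ↦ by
    simpa [thickenedForm, sub_eq_zero] using h (w, 0)
  have hvK : v ∈ K := mem_kernel_of_apply_eq_comp_retraction halt hK hQ hv
  have hv0 : v = 0 := by simpa [hQ ⟨v, hvK⟩] using congrArg Subtype.val hQv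
  refine Prod.ext hv0 (ContinuousLinearMap.ext fun k ↦ ?_)
  rw [← hQ k, ← hv, hv0, map_zero]
  rfl

end Thickening

theorem statement2_general (V : Type*) [NormedAddCommGroup V] [NormedSpace ℝ V]
    (ω : V →L[ℝ] V →L[ℝ] ℝ) (halt : ∀ v : V, ω v v = 0)
    (K : Submodule ℝ V)
    (hK : ∀ v : V, v ∈ K ↔ ∀ w : V, ω v w = 0)
    (P : V →L[ℝ] V)
    (hPmem : ∀ v : V, P v ∈ K)
    (hProj : ∀ v : V, P (P v) = P v)
    (hPrange : LinearMap.range (P : V →ₗ[ℝ] V) = K) :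
    ∀ (v : V) (μ : ↥K →L[ℝ] ℝ),
      (∀ (v' : V) (μ' : ↥K →L[ℝ] ℝ),
          ω v v' + μ' ⟨P v, hPmem v⟩ - μ ⟨P v', hPmem v'⟩ = 0) →
      v = 0 ∧ μ = 0 := by
  have hP : ∀ k : K, P.codRestrict K hPmem k = k := by
    rintro ⟨_, hk⟩
    obtain ⟨x, rfl⟩ := hPrange ▸ hk
    exact Subtype.ext (hProj x)
  exact fun v μ h ↦ Prod.ext_iff.mp
    (eq_zero_of_forall_thickenedForm_eq_zero (x := (v, μ)) halt hK hP fun y ↦ h y.1 y.2)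

/-- Let `V` be a real Banach space, `ω` a continuous alternating bilinear form
on `V` with kernel `K`, assume `K` is (topologically) complemented in `V` with closed complement
`W`, and let `P : V → V` be the continuous projection onto `K` along `W`.  Then the continuous
alternating bilinear form `ω̃` on `V × K*` (with `K*` the continuous dual of `K`) given by
`ω̃((v,μ),(v',μ')) = ω(v,v') + μ'(P v) − μ(P v')` is weakly nondegenerate: if
`ω̃((v,μ),(v',μ')) = 0` for all `(v',μ')`, then `(v,μ) = (0,0)`. -/
theorem statement2 (V : Type*) [NormedAddCommGroup V] [NormedSpace ℝ V] [CompleteSpace V]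
    (ω : V →L[ℝ] V →L[ℝ] ℝ) (halt : ∀ v : V, ω v v = 0)
    (K W : Submodule ℝ V)
    (hKclosed : IsClosed (K : Set V)) (hWclosed : IsClosed (W : Set V))
    (hK : ∀ v : V, v ∈ K ↔ ∀ w : V, ω v w = 0)
    (hcompl : IsCompl K W)
    (P : V →L[ℝ] V)
    (hPmem : ∀ v : V, P v ∈ K)
    (hProj : ∀ v : V, P (P v) = P v)
    (hPrange : LinearMap.range (P : V →ₗ[ℝ] V) = K)
    (hPker : LinearMap.ker (P : V →ₗ[ℝ] V) = W) :
    ∀ (v : V) (μ : ↥K →L[ℝ] ℝ),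
      (∀ (v' : V) (μ' : ↥K →L[ℝ] ℝ),
          ω v v' + μ' ⟨P v, hPmem v⟩ - μ ⟨P v', hPmem v'⟩ = 0) →
      v = 0 ∧ μ = 0 :=
  statement2_general V ω halt K hK P hPmem hProj hPrange
end

section
/- Let V be a finite-dimensional real vector space, ω an alternating bilinear form on V with kernel K, W a complement of K, P the projection onto K along W, and let ω̃ be the form on V × K* given by ω̃((v, μ), (v', μ')) = ω(v, v') + μ'(P v) − μ(P v'). Then the ω̃-orthogonal complement of the subspace V × {0} inside V × K* equals K × {0}; in particular it is contained in V × {0}, so V × {0} is a coisotropic subspace of the symplectic vector space (V × K*, ω̃). -/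
/-!
A pair `(v, μ)` is `ω̃`-orthogonal to `V × {0}` iff `ω(v, ·) = μ ∘ P` on `V`. Testing against
`k ∈ K`, where `P k = k` and `ω(v, k) = -ω(k, v) = 0`, gives `μ = 0`; then `ω(v, ·) = 0`,
i.e. `v ∈ K`.
-/

/-- The symplectic thickening form `ω̃` on `V × K*`:
`ω̃((v,μ),(v',μ')) = ω(v,v') + μ'(P v) − μ(P v')`. -/
noncomputable def omegaThick {V : Type*} [AddCommGroup V] [Module ℝ V]
    (ω : V →ₗ[ℝ] V →ₗ[ℝ] ℝ) (K : Submodule ℝ V)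
    (P : V →ₗ[ℝ] V) (hPmem : ∀ v : V, P v ∈ K)
    (z w : V × Module.Dual ℝ ↥K) : ℝ :=
  ω z.1 w.1 + w.2 ⟨P z.1, hPmem z.1⟩ - z.2 ⟨P w.1, hPmem w.1⟩

section OmegaThick

variable {V : Type*} [AddCommGroup V] [Module ℝ V] {ω : V →ₗ[ℝ] V →ₗ[ℝ] ℝ}
  {K : Submodule ℝ V} {P : V →ₗ[ℝ] V} (hPmem : ∀ v : V, P v ∈ K)

theorem omegaThick_zero_right (z : V × Module.Dual ℝ K) (v' : V) :
    omegaThick ω K P hPmem z (v', 0) = ω z.1 v' - z.2 ⟨P v', hPmem v'⟩ := by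
  simp [omegaThick]

theorem snd_eq_zero_of_forall_omegaThick_eq_zero (hω : ω.IsAlt)
    (hK : ∀ k ∈ K, ∀ w, ω k w = 0) (hPK : ∀ k ∈ K, P k = k) {z : V × Module.Dual ℝ K}
    (hz : ∀ v', omegaThick ω K P hPmem z (v', 0) = 0) : z.2 = 0 := by
  ext ⟨k, hk⟩
  have hωk : ω z.1 k = 0 := by rw [← hω.neg, hK k hk, neg_zero]
  have := hz k
  rw [omegaThick_zero_right, hωk, zero_sub, neg_eq_zero] at this
  simpa only [hPK k hk, LinearMap.zero_apply] using this

theorem omegaThick_orthogonal_prod_bot (hω : ω.IsAlt)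
    (hK : ∀ v, v ∈ K ↔ ∀ w, ω v w = 0) (hPK : ∀ k ∈ K, P k = k) :
    {z : V × Module.Dual ℝ K | ∀ v', omegaThick ω K P hPmem z (v', 0) = 0}
      = {z | z.1 ∈ K ∧ z.2 = 0} := by
  ext z
  constructor
  · intro hz
    have hz₂ := snd_eq_zero_of_forall_omegaThick_eq_zero hPmem hω (fun k hk ↦ (hK k).1 hk) hPK hz
    refine ⟨(hK z.1).2 fun w ↦ ?_, hz₂⟩
    simpa [omegaThick_zero_right, hz₂] using hz w
  · rintro ⟨hz₁, hz₂⟩ v'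
    simp [omegaThick_zero_right, hz₂, (hK z.1).1 hz₁ v']

end OmegaThick

theorem statement3_general (V : Type*) [AddCommGroup V] [Module ℝ V]
    (ω : V →ₗ[ℝ] V →ₗ[ℝ] ℝ) (halt : ∀ v : V, ω v v = 0)
    (K : Submodule ℝ V)
    (hK : ∀ v : V, v ∈ K ↔ ∀ w : V, ω v w = 0)
    (P : V →ₗ[ℝ] V)
    (hPmem : ∀ v : V, P v ∈ K)
    (hProj : P ∘ₗ P = P)
    (hPrange : LinearMap.range P = K) :
    {z : V × Module.Dual ℝ ↥K |
        ∀ v' : V, omegaThick ω K P hPmem z (v', 0) = 0}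
      = {z : V × Module.Dual ℝ ↥K | z.1 ∈ K ∧ z.2 = 0} ∧
    {z : V × Module.Dual ℝ ↥K |
        ∀ v' : V, omegaThick ω K P hPmem z (v', 0) = 0}
      ⊆ {z : V × Module.Dual ℝ ↥K | z.2 = 0} := by
  have hPK : ∀ k ∈ K, P k = k := fun k hk ↦
    (LinearMap.IsIdempotentElem.mem_range_iff hProj).1 (hPrange ▸ hk)
  have horth := omegaThick_orthogonal_prod_bot hPmem halt hK hPK
  exact ⟨horth, horth ▸ fun z hz ↦ hz.2⟩

/-- Let `V` be a finite-dimensional real vector space, `ω` an alternating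
bilinear form with kernel `K`, `W` a complement of `K`, `P` the projection onto `K` along `W`,
and `ω̃` the thickening form on `V × K*`.  Then the `ω̃`-orthogonal complement of the subspace
`V × {0}` inside `V × K*` equals `K × {0}`; in particular it is contained in `V × {0}`, so
`V × {0}` is a coisotropic subspace of the symplectic vector space `(V × K*, ω̃)`. -/
theorem statement3 (V : Type*) [AddCommGroup V] [Module ℝ V] [FiniteDimensional ℝ V]
    (ω : V →ₗ[ℝ] V →ₗ[ℝ] ℝ) (halt : ∀ v : V, ω v v = 0)
    (K W : Submodule ℝ V)
    (hK : ∀ v : V, v ∈ K ↔ ∀ w : V, ω v w = 0)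
    (hcompl : IsCompl K W)
    (P : V →ₗ[ℝ] V)
    (hPmem : ∀ v : V, P v ∈ K)
    (hProj : P ∘ₗ P = P)
    (hPrange : LinearMap.range P = K)
    (hPker : LinearMap.ker P = W) :
    {z : V × Module.Dual ℝ ↥K |
        ∀ v' : V, omegaThick ω K P hPmem z (v', 0) = 0}
      = {z : V × Module.Dual ℝ ↥K | z.1 ∈ K ∧ z.2 = 0} ∧
    {z : V × Module.Dual ℝ ↥K |
        ∀ v' : V, omegaThick ω K P hPmem z (v', 0) = 0}
      ⊆ {z : V × Module.Dual ℝ ↥K | z.2 = 0} :=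
  statement3_general V ω halt K hK P hPmem hProj hPrange
end
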